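/- Let p' < p be points of K with p accumulated on the left by points of K, and let f, h ∈ diff^1(K) satisfy: (1) f is increasing on [p', p], f(p) = p, and f(x) > x for all x ∈ [p', p) ∩ K; (2) there exists a point p* ∈ (p', p) ∩ K such that h(f^n(p*)) = f^n(p*) for all n ≥ 0; (3) there exist a point p0 ∈ [p', p*) ∩ K and an integer N > 0 such that h(p0) ≠ p0 and h(f^n(p0)) = f^n(p0) for all n ≥ N. Then there exists an integer N' > 0 such that the subsemigroup generated by f^{N'} and f^{N'} ∘ h is free on these two generators. -/

import Mathlib

open Set

/-- `K` is a Cantor set in `ℝ`: nonempty, compact, totally disconnected, perfect. -/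
def IsCantorInR (K : Set ℝ) : Prop :=
  K.Nonempty ∧ IsCompact K ∧ IsTotallyDisconnected K ∧ Perfect K

open Classical in
/-- Apply a permutation of `K` to a real number (identity outside `K`). -/
noncomputable def apK (K : Set ℝ) (f : Equiv.Perm K) (y : ℝ) : ℝ :=
  if h : y ∈ K then (f ⟨y, h⟩ : ℝ) else y

/-- `f` locally coincides with a `C¹` embedding of an open interval with
nowhere-vanishing derivative. -/
def IsD1 (K : Set ℝ) (f : Equiv.Perm K) : Prop :=
  ∀ x : K, ∃ a b : ℝ, (x : ℝ) ∈ Set.Ioo a b ∧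
    ∃ F F' : ℝ → ℝ,
      (∀ y ∈ Set.Ioo a b, HasDerivAt F (F' y) y ∧ F' y ≠ 0) ∧
      ContinuousOn F' (Set.Ioo a b) ∧
      Set.InjOn F (Set.Ioo a b) ∧
      (∀ y : ℝ, y ∈ Set.Ioo a b → y ∈ K → F y = apK K f y)

/-- `f` locally coincides with a `C¹` embedding of an open interval with
nowhere-vanishing derivative whose log-derivative is Lipschitz. -/
def IsD1Lip (K : Set ℝ) (f : Equiv.Perm K) : Prop :=
  ∀ x : K, ∃ a b : ℝ, (x : ℝ) ∈ Set.Ioo a b ∧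
    ∃ F F' : ℝ → ℝ,
      (∀ y ∈ Set.Ioo a b, HasDerivAt F (F' y) y ∧ F' y ≠ 0) ∧
      ContinuousOn F' (Set.Ioo a b) ∧
      Set.InjOn F (Set.Ioo a b) ∧
      (∃ C : NNReal, LipschitzOnWith C (fun y => Real.log |F' y|) (Set.Ioo a b)) ∧
      (∀ y : ℝ, y ∈ Set.Ioo a b → y ∈ K → F y = apK K f y)

/-- membership in `diff¹(K)`: a homeomorphism of `K` locally coinciding
with `C¹` diffeomorphisms of intervals of `ℝ`. -/
def MemDiff1 (K : Set ℝ) (f : Equiv.Perm K) : Prop :=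
  Continuous (fun x : K => f x) ∧ Continuous (fun x : K => f.symm x) ∧ IsD1 K f

/-- membership in `diff^{1+Lip}(K)`. -/
def MemDiffLip (K : Set ℝ) (f : Equiv.Perm K) : Prop :=
  Continuous (fun x : K => f x) ∧ Continuous (fun x : K => f.symm x) ∧ IsD1Lip K f

/-- The derivative of `f` at `x`, as a limit of difference quotients within `K`. -/
def HasDerivOnK (K : Set ℝ) (f : Equiv.Perm K) (x d : ℝ) : Prop :=
  Filter.Tendsto (fun y : ℝ => (apK K f y - apK K f x) / (y - x))
    (nhdsWithin x (K \ {x})) (nhds d)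

/-- `f` is increasing on the interval `I`: it coincides on `I ∩ K` with an
increasing `C¹` diffeomorphism of `I` onto an interval of `ℝ`. -/
def IncreasingOnK (K : Set ℝ) (f : Equiv.Perm K) (I : Set ℝ) : Prop :=
  ∃ F F' : ℝ → ℝ,
    StrictMonoOn F I ∧
    (∀ y ∈ I, HasDerivWithinAt F (F' y) I y ∧ 0 < F' y) ∧
    ContinuousOn F' I ∧
    (∀ y ∈ I, y ∈ K → F y = apK K f y)

/-- `A` is invariant under the subgroup `G`. -/
def IsInvariantSet (K : Set ℝ) (G : Subgroup (Equiv.Perm K)) (A : Set ℝ) : Prop :=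
  ∀ g ∈ G, ∀ x ∈ A, apK K g x ∈ A

/-- `A` is a minimal invariant set for the action of `G` on `K`. -/
def IsMinimalInvariantSet (K : Set ℝ) (G : Subgroup (Equiv.Perm K)) (A : Set ℝ) : Prop :=
  A.Nonempty ∧ A ⊆ K ∧ IsClosed A ∧ IsInvariantSet K G A ∧
    ∀ B : Set ℝ, B.Nonempty → B ⊆ A → IsClosed B → IsInvariantSet K G B → B = A

/-- The set of points of `K` fixed by every element of `H`. -/
def fixedSet (K : Set ℝ) (H : Subgroup (Equiv.Perm K)) : Set ℝ :=
  {x | x ∈ K ∧ ∀ g ∈ H, apK K g x = x}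

/-- `a, b` generate a free subsemigroup: distinct nonempty positive words in
`a` and `b` define distinct elements. -/
def IsFreePair {M : Type*} [Monoid M] (a b : M) : Prop :=
  ∀ w₁ w₂ : List Bool, w₁ ≠ [] → w₂ ≠ [] →
    (w₁.map (fun t => if t then a else b)).prod = (w₂.map (fun t => if t then a else b)).prod →
    w₁ = w₂

/-- `G` contains no free subsemigroup on two generators. -/
def HasNoFreeSubsemigroup {Γ : Type*} [Group Γ] (G : Subgroup Γ) : Prop :=
  ¬ ∃ a ∈ G, ∃ b ∈ G, IsFreePair a b

/-- `p` is accumulated on the left by `A`. -/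
def AccLeft (p : ℝ) (A : Set ℝ) : Prop := ∀ α > 0, (Set.Ico (p - α) p ∩ A).Nonempty

/-- `p` is accumulated on the right by `A`. -/
def AccRight (p : ℝ) (A : Set ℝ) : Prop := ∀ α > 0, (Set.Ioc p (p + α) ∩ A).Nonempty

/-!
Write `x` for `p₀`, `a = f ^ N` and `b = f ^ N * h`. Since `h` fixes `f ^ n x` for `n ≥ N`, both
`a` and `b` send `f ^ n x` to `f ^ (n + N) x` for such `n`, so a positive word of length `l` sends
`f ^ N x` to `f ^ ((l + 1) N) x`. The `f`-orbit of `x` is infinite (were `x` periodic, `h` would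
fix it), so words with equal products have equal lengths. Two words `U a`, `V b` of equal length
differ at `x`: `U a x = f ^ ((l + 1) N) x = V a x`, whereas `V b x = V a (h x) ≠ V a x`.
Cancelling equal last letters then shows that equal products come from equal words.
-/

section Words

variable {M : Type*} [Monoid M]

def wordProd (a b : M) (w : List Bool) : M :=
  (w.map fun t => if t then a else b).prod

@[simp]
theorem wordProd_nil (a b : M) : wordProd a b [] = 1 := rfl

@[simp]
theorem wordProd_cons (a b : M) (t : Bool) (w : List Bool) :
    wordProd a b (t :: w) = (if t then a else b) * wordProd a b w := by
  simp [wordProd]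

@[simp]
theorem wordProd_append_singleton (a b : M) (w : List Bool) (t : Bool) :
    wordProd a b (w ++ [t]) = wordProd a b w * if t then a else b := by
  simp [wordProd]

end Words

section FixedTail

variable {G α : Type*} [Group G] [MulAction G α] {f h : G} {x : α} {N : ℕ}

theorem injective_pow_smul_of_fixed_tail (hmove : h • x ≠ x)
    (hfix : ∀ n, N ≤ n → h • f ^ n • x = f ^ n • x) :
    Function.Injective fun n : ℕ => f ^ n • x := by
  have not_periodic : ∀ d, f ^ (d + 1) • x ≠ x := by
    intro d hd
    have hstab : f ^ ((d + 1) * N) • x = x := by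
      rw [pow_mul, ← MulAction.mem_stabilizer_iff]
      exact Subgroup.pow_mem _ (MulAction.mem_stabilizer_iff.mpr hd) N
    have := hfix ((d + 1) * N) (Nat.le_mul_of_pos_left N d.succ_pos)
    exact hmove (by rwa [hstab] at this)
  have ne_of_lt : ∀ m d, f ^ (m + d + 1) • x ≠ f ^ m • x := by
    intro m d hmd
    rw [add_assoc, pow_add, mul_smul, smul_left_cancel_iff] at hmd
    exact not_periodic d hmd
  intro m n hmn
  by_contra hne
  rcases Nat.lt_or_gt_of_ne hne with hlt | hlt
  · obtain ⟨d, rfl⟩ := Nat.exists_eq_add_of_lt hlt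
    exact ne_of_lt m d hmn.symm
  · obtain ⟨d, rfl⟩ := Nat.exists_eq_add_of_lt hlt
    exact ne_of_lt n d hmn

theorem wordProd_smul_pow_smul (hfix : ∀ n, N ≤ n → h • f ^ n • x = f ^ n • x)
    (w : List Bool) {n : ℕ} (hn : N ≤ n) :
    wordProd (f ^ N) (f ^ N * h) w • f ^ n • x = f ^ (w.length * N + n) • x := by
  induction w with
  | nil => simp
  | cons t w ih =>
    have hfix' := hfix _ (le_add_left hn : N ≤ w.length * N + n)
    have hexp : (t :: w).length * N + n = N + (w.length * N + n) := by
      simp only [List.length_cons]; ring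
    rw [wordProd_cons, mul_smul, ih, hexp, pow_add f N, mul_smul]
    cases t
    · rw [if_neg Bool.false_ne_true, mul_smul, hfix']
    · rw [if_pos rfl]

theorem length_eq_of_wordProd_eq (hmove : h • x ≠ x)
    (hfix : ∀ n, N ≤ n → h • f ^ n • x = f ^ n • x) {u v : List Bool}
    (huv : wordProd (f ^ N) (f ^ N * h) u = wordProd (f ^ N) (f ^ N * h) v) :
    u.length = v.length := by
  have hN : 0 < N := Nat.pos_of_ne_zero <| by
    rintro rfl
    exact hmove (by simpa using hfix 0 le_rfl)
  have hexp : u.length * N + N = v.length * N + N := by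
    apply injective_pow_smul_of_fixed_tail hmove hfix
    simp only [← wordProd_smul_pow_smul hfix _ le_rfl, huv]
  exact Nat.eq_of_mul_eq_mul_right hN (Nat.add_right_cancel hexp)

theorem wordProd_append_true_ne_append_false (hmove : h • x ≠ x)
    (hfix : ∀ n, N ≤ n → h • f ^ n • x = f ^ n • x) {u v : List Bool}
    (huv : u.length = v.length) :
    wordProd (f ^ N) (f ^ N * h) (u ++ [true]) ≠ wordProd (f ^ N) (f ^ N * h) (v ++ [false]) := by
  intro heq
  have hx := congrArg (· • x) heq
  simp only [wordProd_append_singleton, Bool.false_eq_true, ↓reduceIte, mul_smul] at hx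
  rw [wordProd_smul_pow_smul hfix u le_rfl, huv, ← wordProd_smul_pow_smul hfix v le_rfl,
    smul_left_cancel_iff, smul_left_cancel_iff] at hx
  exact hmove hx.symm

theorem isFreePair_pow_pow_mul (hmove : h • x ≠ x)
    (hfix : ∀ n, N ≤ n → h • f ^ n • x = f ^ n • x) :
    IsFreePair (f ^ N) (f ^ N * h) := by
  suffices key : ∀ u v : List Bool, u.length = v.length →
      wordProd (f ^ N) (f ^ N * h) u = wordProd (f ^ N) (f ^ N * h) v → u = v from
    fun u v _ _ huv => key u v (length_eq_of_wordProd_eq hmove hfix huv) huv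
  intro u
  induction u using List.reverseRecOn with
  | nil => intro v hv _; exact (List.length_eq_zero_iff.mp hv.symm).symm
  | append_singleton u s ih =>
    intro v hv huv
    obtain ⟨v, t, rfl⟩ : ∃ v' t, v = v' ++ [t] := by
      rcases v.eq_nil_or_concat' with rfl | hv'
      · simp at hv
      · exact hv'
    have hlen : u.length = v.length := by simpa using hv
    cases s <;> cases t
    case false.false | true.true =>
      rw [wordProd_append_singleton, wordProd_append_singleton] at huv
      rw [ih v hlen (mul_right_cancel huv)]
    case true.false => exact absurd huv (wordProd_append_true_ne_append_false hmove hfix hlen)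
    case false.true =>
      exact absurd huv.symm (wordProd_append_true_ne_append_false hmove hfix hlen.symm)

end FixedTail

theorem apK_coe (K : Set ℝ) (g : Equiv.Perm K) (x : K) : apK K g x = g x := by
  simp [apK]

theorem semifree_criterion_general (K : Set ℝ) (p' : ℝ) (f h : Equiv.Perm K) (pstar : ℝ)
    (p₀ : ℝ) (hp₀ : p₀ ∈ Set.Ico p' pstar ∩ K) (N : ℕ) (hN : 0 < N)
    (h3a : apK K h p₀ ≠ p₀)
    (h3b : ∀ n : ℕ, N ≤ n → apK K h (apK K (f ^ n) p₀) = apK K (f ^ n) p₀) :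
    ∃ N' : ℕ, 0 < N' ∧ IsFreePair (f ^ N') (f ^ N' * h) := by
  set P : K := ⟨p₀, hp₀.2⟩
  have hmove : h • P ≠ P := by
    intro hP
    apply h3a
    change apK K h P = P
    rw [apK_coe, ← Equiv.Perm.smul_def, hP]
  have hfix : ∀ n, N ≤ n → h • f ^ n • P = f ^ n • P := by
    intro n hn
    have := h3b n hn
    change apK K h (apK K (f ^ n) P) = apK K (f ^ n) P at this
    rw [apK_coe, apK_coe] at this
    exact Subtype.coe_injective this
  exact ⟨N, hN, isFreePair_pow_pow_mul hmove hfix⟩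

/-- The free-subsemigroup criterion (Lemma on `f`, `h` and the
points `p₀`, `p*`). -/
theorem semifree_criterion (K : Set ℝ) (hK : IsCantorInR K)
    (p' p : ℝ) (hp' : p' ∈ K) (hp : p ∈ K) (hlt : p' < p)
    (hacc : AccLeft p K)
    (f h : Equiv.Perm K) (hf : MemDiff1 K f) (hh : MemDiff1 K h)
    (h1a : IncreasingOnK K f (Set.Icc p' p))
    (h1b : apK K f p = p)
    (h1c : ∀ x ∈ Set.Ico p' p ∩ K, x < apK K f x)
    (pstar : ℝ) (hpstar : pstar ∈ Set.Ioo p' p ∩ K)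
    (h2 : ∀ n : ℕ, apK K h (apK K (f ^ n) pstar) = apK K (f ^ n) pstar)
    (p₀ : ℝ) (hp₀ : p₀ ∈ Set.Ico p' pstar ∩ K)
    (N : ℕ) (hN : 0 < N)
    (h3a : apK K h p₀ ≠ p₀)
    (h3b : ∀ n : ℕ, N ≤ n → apK K h (apK K (f ^ n) p₀) = apK K (f ^ n) p₀) :
    ∃ N' : ℕ, 0 < N' ∧ IsFreePair (f ^ N') (f ^ N' * h) :=
  semifree_criterion_general K p' f h pstar p₀ hp₀ N hN h3a h3b
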